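/- Let I = (G, 𝐓, W, k) be a tuple where G = (V,E) is a finite simple undirected graph, 𝐓 is a finite set of pairs of vertices, W ⊆ V is a vertex multicut of (G,𝐓), and k is an integer. Let Z ⊆ V ∖ W and let I′ = (G′, 𝐓′, W, k) = torso(I, Z). Then: (1) if I has no solution, then I′ has no solution; and (2) if X is a solution of I with |X| ≤ k and X ∩ Z = ∅, then X is also a solution of I′. -/

import Mathlib

open scoped Classical

variable {V : Type*} [Fintype V] [DecidableEq V]

/-- The graph `G − X`: the graph obtained from `G` by deleting the vertices of `X`
(encoded on the same vertex type: vertices of `X` become isolated). -/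
def removeVerts (G : SimpleGraph V) (X : Set V) : SimpleGraph V where
  Adj u v := G.Adj u v ∧ u ∉ X ∧ v ∉ X
  symm := by refine ⟨?_⟩; rintro u v ⟨h, hu, hv⟩; exact ⟨h.symm, hv, hu⟩
  loopless := by refine ⟨?_⟩; rintro v ⟨h, -, -⟩; exact G.ne_of_adj h rfl

/-- The open neighborhood `N(C)` of a vertex set `C`. -/
def nbhd (G : SimpleGraph V) (C : Set V) : Set V :=
  {v | v ∉ C ∧ ∃ u ∈ C, G.Adj u v}

/-- `X` is a vertex multicut of `(G, Pairs)`. -/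
def IsMulticut (G : SimpleGraph V) (Pairs : Set (V × V)) (X : Set V) : Prop :=
  ∀ p ∈ Pairs, ¬ (removeVerts G X).Reachable p.1 p.2

/-- A solution of the Vertex Multicut Compression instance `(G, Pairs, W, k)`. -/
def IsSolution (G : SimpleGraph V) (Pairs : Set (V × V)) (W : Set V) (k : ℕ)
    (X : Set V) : Prop :=
  X.ncard ≤ k ∧ IsMulticut G Pairs X ∧ Disjoint X W ∧
    ∀ w₁ ∈ W, ∀ w₂ ∈ W, w₁ ≠ w₂ → ¬ (removeVerts G X).Reachable w₁ w₂

/-- `u` and `v` are connected by a `Z`-path in `G` (a path whose internal vertices lie in `Z`). -/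
def ZPathConn (G : SimpleGraph V) (Z : Set V) (u v : V) : Prop :=
  ∃ p : G.Walk u v, ∀ x ∈ p.support, x = u ∨ x = v ∨ x ∈ Z

/-- The torso graph: vertex set `V ∖ Z` (vertices of `Z` become isolated), with an edge
between distinct `u, v ∉ Z` whenever they are connected by a `Z`-path in `G`. -/
def torsoGraph (G : SimpleGraph V) (Z : Set V) : SimpleGraph V where
  Adj u v := u ≠ v ∧ u ∉ Z ∧ v ∉ Z ∧ ZPathConn G Z u v
  symm := by
    refine ⟨?_⟩
    rintro u v ⟨hne, hu, hv, p, hp⟩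
    refine ⟨hne.symm, hv, hu, p.reverse, ?_⟩
    intro x hx
    rw [SimpleGraph.Walk.support_reverse, List.mem_reverse] at hx
    rcases hp x hx with h | h | h
    · exact Or.inr (Or.inl h)
    · exact Or.inl h
    · exact Or.inr (Or.inr h)
  loopless := by refine ⟨?_⟩; rintro v ⟨hne, -⟩; exact hne rfl

/-- `φ(v)`: for `v ∈ Z`, the set of vertices of `V ∖ Z` connected to `v` by a `Z`-path;
for `v ∉ Z`, the singleton `{v}`. -/
def phi (G : SimpleGraph V) (Z : Set V) (v : V) : Set V :=
  {u | (v ∈ Z ∧ u ∉ Z ∧ ZPathConn G Z v u) ∨ (v ∉ Z ∧ u = v)}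

/-- The terminal pairs of the torso instance. -/
def torsoPairs (G : SimpleGraph V) (Z : Set V) (Pairs : Set (V × V)) : Set (V × V) :=
  {q | ∃ p ∈ Pairs, q.1 ∈ phi G Z p.1 ∧ q.2 ∈ phi G Z p.2}


set_option linter.unusedSectionVars false

section Aux

variable {G : SimpleGraph V} {Z X X' Y W : Set V}

lemma reach_of_walk_avoid {u v : V} (p : G.Walk u v) :
    (∀ x ∈ p.support, x ∉ X) → (removeVerts G X).Reachable u v := by
  induction p with
  | nil => intro _; exact SimpleGraph.Walk.nil.reachable
  | @cons a b c h q ih =>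
    intro hp
    have ha : a ∉ X := hp a (by simp)
    have hb : b ∉ X := hp b (by simp)
    have hadj : (removeVerts G X).Adj a b := ⟨h, ha, hb⟩
    refine hadj.reachable.trans (ih ?_)
    intro x hx
    exact hp x (by simp [hx])

lemma eq_of_walk_endpoint_mem {H : SimpleGraph V} {u v : V}
    (p : (removeVerts H X).Walk u v) (h : u ∈ X ∨ v ∈ X) : u = v := by
  induction p with
  | nil => rfl
  | @cons a b c hab q ih =>
    rcases h with h | h
    · exact absurd h hab.2.1
    · have hbc := ih (Or.inr h)
      subst hbc
      exact absurd h hab.2.2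

lemma walk_support_avoid {H : SimpleGraph V} {u v : V}
    (p : (removeVerts H X).Walk u v) : u ∉ X → ∀ x ∈ p.support, x ∉ X := by
  induction p with
  | nil =>
    intro hu x hx
    simp only [SimpleGraph.Walk.support_nil, List.mem_singleton] at hx
    subst hx; exact hu
  | @cons a b c hab q ih =>
    intro hu x hx
    simp only [SimpleGraph.Walk.support_cons, List.mem_cons] at hx
    rcases hx with rfl | hx
    · exact hu
    · exact ih hab.2.2 x hx

lemma toWalkG {u v : V} (p : (removeVerts G X).Walk u v) :
    ∃ q : G.Walk u v, q.support = p.support := by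
  induction p with
  | nil => exact ⟨SimpleGraph.Walk.nil, rfl⟩
  | @cons a b c h q ih =>
    obtain ⟨q', hq'⟩ := ih
    exact ⟨SimpleGraph.Walk.cons h.1 q', by simp [hq']⟩

lemma reach_of_torso_walk (hXZ : ∀ z ∈ Z, z ∉ X) {u v : V}
    (p : (removeVerts (torsoGraph G Z) X).Walk u v) :
    (removeVerts G X).Reachable u v := by
  induction p with
  | nil => exact ⟨SimpleGraph.Walk.nil⟩
  | @cons a b c hab q ih =>
    obtain ⟨⟨hne, haZ, hbZ, w, hw⟩, haX, hbX⟩ := hab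
    refine (reach_of_walk_avoid w ?_).trans ih
    intro x hx
    rcases hw x hx with rfl | rfl | h
    · exact haX
    · exact hbX
    · exact hXZ x h

lemma reach_of_phi (hZY : ∀ z ∈ Z, z ∉ Y) {s s' : V}
    (hs' : s' ∈ phi G Z s) (hs'Y : s' ∉ Y) :
    (removeVerts G Y).Reachable s s' := by
  rcases hs' with ⟨hsZ, _hs'Z, w, hw⟩ | ⟨_hsZ, rfl⟩
  · refine reach_of_walk_avoid w ?_
    intro x hx
    rcases hw x hx with rfl | rfl | h
    · exact hZY x hsZ
    · exact hs'Y
    · exact hZY x h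
  · exact ⟨SimpleGraph.Walk.nil⟩

lemma phi_not_Z {s s' : V} (h : s' ∈ phi G Z s) : s' ∉ Z := by
  rcases h with ⟨_, h, _⟩ | ⟨h, rfl⟩ <;> exact h

lemma phi_self {s s' : V} (hs : s ∉ Z) (h : s' ∈ phi G Z s) : s' = s := by
  rcases h with ⟨h, _⟩ | ⟨_, rfl⟩
  · exact absurd h hs
  · rfl

lemma self_mem_phi {s : V} (hs : s ∉ Z) : s ∈ phi G Z s :=
  Or.inr ⟨hs, rfl⟩

lemma zpathconn_of_adj_phi {a c c' : V}
    (h : G.Adj a c) (hc' : c' ∈ phi G Z c) : ZPathConn G Z a c' := by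
  rcases hc' with ⟨hcZ, _hc'Z, w, hw⟩ | ⟨_hcZ, rfl⟩
  · refine ⟨SimpleGraph.Walk.cons h w, ?_⟩
    intro x hx
    rw [SimpleGraph.Walk.support_cons, List.mem_cons] at hx
    rcases hx with rfl | hx
    · exact Or.inl rfl
    · rcases hw x hx with rfl | rfl | hxZ
      · exact Or.inr (Or.inr hcZ)
      · exact Or.inr (Or.inl rfl)
      · exact Or.inr (Or.inr hxZ)
  · refine ⟨SimpleGraph.Walk.cons h SimpleGraph.Walk.nil, ?_⟩
    intro x hx
    simp only [SimpleGraph.Walk.support_cons, SimpleGraph.Walk.support_nil,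
      List.mem_cons, List.not_mem_nil, or_false] at hx
    rcases hx with rfl | rfl
    · exact Or.inl rfl
    · exact Or.inr (Or.inl rfl)

lemma torso_reach_of_zpc {a c : V}
    (hz : ZPathConn G Z a c) (haZ : a ∉ Z) (hcZ : c ∉ Z) (haX : a ∉ X) (hcX : c ∉ X) :
    (removeVerts (torsoGraph G Z) X).Reachable a c := by
  by_cases hac : a = c
  · subst hac; exact ⟨SimpleGraph.Walk.nil⟩
  · have hadj : (removeVerts (torsoGraph G Z) X).Adj a c := ⟨⟨hac, haZ, hcZ, hz⟩, haX, hcX⟩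
    exact hadj.reachable

lemma project_walk {a b : V} (p : G.Walk a b) :
    (∀ x ∈ p.support, x ∈ Z ∨ x ∉ X') → (∃ x ∈ p.support, x ∉ Z) →
    ∃ a' b', a' ∈ phi G Z a ∧ b' ∈ phi G Z b ∧ a' ∉ X' ∧ b' ∉ X' ∧
      (removeVerts (torsoGraph G Z) X').Reachable a' b' := by
  induction p with
  | nil =>
    intro hsup hex
    obtain ⟨x, hx, hxZ⟩ := hex
    simp only [SimpleGraph.Walk.support_nil, List.mem_singleton] at hx
    subst hx
    have haX : x ∉ X' := (hsup _ (by simp)).resolve_left hxZ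
    exact ⟨x, x, self_mem_phi hxZ, self_mem_phi hxZ, haX, haX, ⟨SimpleGraph.Walk.nil⟩⟩
  | @cons a c b h q ih =>
    intro hsup hex
    have hsupq : ∀ x ∈ q.support, x ∈ Z ∨ x ∉ X' := fun x hx => hsup x (by simp [hx])
    by_cases haZ : a ∈ Z
    · have hexq : ∃ x ∈ q.support, x ∉ Z := by
        obtain ⟨x, hx, hxZ⟩ := hex
        rw [SimpleGraph.Walk.support_cons, List.mem_cons] at hx
        rcases hx with rfl | hx
        · exact absurd haZ hxZ
        · exact ⟨x, hx, hxZ⟩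
      obtain ⟨c', b', hc', hb', hc'X, hb'X, hr⟩ := ih hsupq hexq
      refine ⟨c', b', ?_, hb', hc'X, hb'X, hr⟩
      exact Or.inl ⟨haZ, phi_not_Z hc', zpathconn_of_adj_phi h hc'⟩
    · have haX : a ∉ X' := (hsup a (by simp)).resolve_left haZ
      by_cases hexq : ∃ x ∈ q.support, x ∉ Z
      · obtain ⟨c', b', hc', hb', hc'X, hb'X, hr⟩ := ih hsupq hexq
        have hzc : ZPathConn G Z a c' := zpathconn_of_adj_phi h hc'
        have hac' : (removeVerts (torsoGraph G Z) X').Reachable a c' :=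
          torso_reach_of_zpc hzc haZ (phi_not_Z hc') haX hc'X
        exact ⟨a, b', self_mem_phi haZ, hb', haX, hb'X, hac'.trans hr⟩
      · push_neg at hexq
        have hbZ : b ∈ Z := hexq b (SimpleGraph.Walk.end_mem_support q)
        have hb' : a ∈ phi G Z b := by
          refine Or.inl ⟨hbZ, haZ, (SimpleGraph.Walk.cons h q).reverse, ?_⟩
          intro x hx
          rw [SimpleGraph.Walk.support_reverse, List.mem_reverse,
            SimpleGraph.Walk.support_cons, List.mem_cons] at hx
          rcases hx with rfl | hx
          · exact Or.inr (Or.inl rfl)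
          · exact Or.inr (Or.inr (hexq x hx))
        exact ⟨a, a, self_mem_phi haZ, hb', haX, haX, ⟨SimpleGraph.Walk.nil⟩⟩

end Aux

/-- Properties of the torso operation: it preserves no-instances, and any
solution of the original instance avoiding `Z` is a solution of the torso instance. -/
theorem torso_properties
    (G : SimpleGraph V) (Pairs : Set (V × V)) (W : Set V) (k : ℕ)
    (hW : IsMulticut G Pairs W) (Z : Set V) (hZ : Disjoint Z W) :
    ((¬ ∃ X, IsSolution G Pairs W k X) →
      ¬ ∃ X', IsSolution (torsoGraph G Z) (torsoPairs G Z Pairs) W k X') ∧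
    (∀ X, IsSolution G Pairs W k X → X ∩ Z = ∅ →
      IsSolution (torsoGraph G Z) (torsoPairs G Z Pairs) W k X) := by
  have hZW : ∀ z ∈ Z, z ∉ W := fun z hz => Set.disjoint_left.mp hZ hz
  have hWZ : ∀ w ∈ W, w ∉ Z := fun w hw => Set.disjoint_right.mp hZ hw
  constructor
  · intro hno
    rintro ⟨X', hX'⟩
    obtain ⟨hcard, hmc, hdisj, hmw⟩ := hX'
    apply hno
    refine ⟨X' \ Z, ?_, ?_, ?_, ?_⟩
    · exact le_trans (Set.ncard_le_ncard Set.diff_subset (Set.toFinite _)) hcard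
    · rintro ⟨s, t⟩ hP hreach
      have hst : s ≠ t := by
        rintro rfl
        exact hW (s, s) hP ⟨SimpleGraph.Walk.nil⟩
      obtain ⟨p⟩ := hreach
      cases p with
      | nil => exact hst rfl
      | @cons _ c _ h q =>
        have hsX : s ∉ X' \ Z := h.2.1
        have hsup := walk_support_avoid (SimpleGraph.Walk.cons h q) hsX
        obtain ⟨q', hq'⟩ := toWalkG (SimpleGraph.Walk.cons h q)
        have hsup' : ∀ x ∈ q'.support, x ∈ Z ∨ x ∉ X' := by
          intro x hx
          have hxX := hsup x (hq' ▸ hx)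
          by_cases hxZ : x ∈ Z
          · exact Or.inl hxZ
          · exact Or.inr fun hxX' => hxX ⟨hxX', hxZ⟩
        by_cases hex : ∃ x ∈ q'.support, x ∉ Z
        · obtain ⟨s', t', hs', ht', hs'X, ht'X, hr⟩ := project_walk q' hsup' hex
          exact hmc (s', t') ⟨(s, t), hP, hs', ht'⟩ hr
        · push_neg at hex
          refine hW (s, t) hP (reach_of_walk_avoid q' ?_)
          intro x hx
          exact hZW x (hex x hx)
    · exact Set.disjoint_of_subset_left Set.diff_subset hdisj
    · intro w₁ hw₁ w₂ hw₂ hne hreach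
      obtain ⟨p⟩ := hreach
      have hw₁X : w₁ ∉ X' \ Z := fun hx => Set.disjoint_left.mp hdisj hx.1 hw₁
      have hsup := walk_support_avoid p hw₁X
      obtain ⟨q', hq'⟩ := toWalkG p
      have hsup' : ∀ x ∈ q'.support, x ∈ Z ∨ x ∉ X' := by
        intro x hx
        have hxX := hsup x (hq' ▸ hx)
        by_cases hxZ : x ∈ Z
        · exact Or.inl hxZ
        · exact Or.inr fun hxX' => hxX ⟨hxX', hxZ⟩
      have hex : ∃ x ∈ q'.support, x ∉ Z :=
        ⟨w₁, by rw [hq']; exact SimpleGraph.Walk.start_mem_support p, hWZ w₁ hw₁⟩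
      obtain ⟨s', t', hs', ht', hs'X, ht'X, hr⟩ := project_walk q' hsup' hex
      have hs1 : s' = w₁ := phi_self (hWZ w₁ hw₁) hs'
      have ht1 : t' = w₂ := phi_self (hWZ w₂ hw₂) ht'
      subst hs1; subst ht1
      exact hmw s' hw₁ t' hw₂ hne hr
  · intro X hX hXZ
    obtain ⟨hcard, hmc, hdisj, hmw⟩ := hX
    have hZX : ∀ z ∈ Z, z ∉ X := fun z hz hx =>
      (Set.eq_empty_iff_forall_notMem.mp hXZ z) ⟨hx, hz⟩
    refine ⟨hcard, ?_, hdisj, ?_⟩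
    · rintro ⟨s', t'⟩ ⟨⟨s, t⟩, hP, hs', ht'⟩ hreach
      obtain ⟨p⟩ := hreach
      by_cases hs'X : s' ∈ X
      · have heq : s' = t' := eq_of_walk_endpoint_mem p (Or.inl hs'X)
        subst heq
        have hs'W : s' ∉ W := fun hw => Set.disjoint_left.mp hdisj hs'X hw
        have h1 := reach_of_phi hZW hs' hs'W
        have h2 := reach_of_phi hZW ht' hs'W
        exact hW (s, t) hP (h1.trans h2.symm)
      · by_cases ht'X : t' ∈ X
        · have heq : s' = t' := eq_of_walk_endpoint_mem p (Or.inr ht'X)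
          exact hs'X (by rw [heq]; exact ht'X)
        · have h0 := reach_of_torso_walk hZX p
          have h1 := reach_of_phi hZX hs' hs'X
          have h2 := reach_of_phi hZX ht' ht'X
          exact hmc (s, t) hP (h1.trans (h0.trans h2.symm))
    · intro w₁ hw₁ w₂ hw₂ hne hreach
      obtain ⟨p⟩ := hreach
      exact hmw w₁ hw₁ w₂ hw₂ hne (reach_of_torso_walk hZX p)
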